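/- arXiv:1710.04864 — 2 statements merged into one kernel-verified Lean document; each statement's English description precedes it below -/
import Mathlib

section
/- Let f, g : ℝ → ℂ and define the weighted convolution (f *ᴬ g)(t) = ∫_ℝ f(τ) g(t−τ) W(t,τ) dτ with weight W(t,τ) = exp(i·τ(τ−t)·a/b). If h = f *ᴬ g, then the linear canonical transforms satisfy H_A(u) = √(2πib) · e^{−i d u²/(2b)} · F_A(u) · G_A(u), where F_A, G_A, H_A denote the LCTs of f, g, h respectively (assuming f, g ∈ L¹(ℝ)). -/
open MeasureTheory Filter Complex

noncomputable def wconv (a b : ℝ) (f g : ℝ → ℂ) : ℝ → ℂ :=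
  fun t => ∫ τ : ℝ, f τ * g (t - τ) *
    Complex.exp (Complex.I * ((a : ℂ) / b * τ * (τ - t)))

noncomputable def lct (a b d : ℝ) (f : ℝ → ℂ) : ℝ → ℂ :=
  fun u => (1 / (2 * Real.pi * Complex.I * b)) ^ ((1 : ℂ) / 2) *
    ∫ t : ℝ, Complex.exp (Complex.I / 2 *
      ((a : ℂ) / b * t ^ 2 - 2 / b * u * t + (d : ℂ) / b * u ^ 2)) * f t

def IsDeltaSeq (a b : ℝ) (δ : ℕ → ℝ → ℂ) : Prop :=
  (∀ n, Continuous (δ n)) ∧ (∀ n, HasCompactSupport (δ n)) ∧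
  (∀ n, Integrable (δ n)) ∧ (∀ n, MemLp (δ n) 2) ∧
  (∀ n, ∫ t : ℝ, Complex.exp (Complex.I * a * t ^ 2 / (2 * b)) * δ n t = 1) ∧
  (∀ ε : ℝ, 0 < ε →
    Tendsto (fun n => ∫ t in {t : ℝ | ε < |t|}, ‖δ n t‖) atTop (nhds 0))

/-!
Write `K_u(t)` for the chirp kernel of the LCT. Since `K_u(s + τ) · e^{iτ(τ - (s + τ))a/b}
equals `e^{-i d u²/(2b)} K_u(τ) K_u(s)`, Fubini and the shift `t = s + τ` turn
`∫ K_u (f *ᴬ g)` into `e^{-i d u²/(2b)} (∫ K_u f)(∫ K_u g)`; the normalising factors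
`(1/(2πib))^{1/2}` and `(2πib)^{1/2}` cancel because `2πib` is off the branch cut.
-/

section WeightedConvolution

variable {G : Type*} [MeasurableSpace G] [AddGroup G] [MeasurableAdd₂ G] [MeasurableNeg G]
  {μ : Measure G} [SFinite μ] [μ.IsAddRightInvariant]

theorem integral_mul_weightedConvolution_eq {f g K : G → ℂ} {W : G → G → ℂ} {C : ℂ}
    {MK MW : ℝ} (hf : Integrable f μ) (hg : Integrable g μ)
    (hK : AEStronglyMeasurable K μ)
    (hW : AEStronglyMeasurable (fun p : G × G => W p.1 p.2) (μ.prod μ))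
    (hKb : ∀ t, ‖K t‖ ≤ MK) (hWb : ∀ t τ, ‖W t τ‖ ≤ MW)
    (hKW : ∀ τ s, K (s + τ) * W (s + τ) τ = C * K τ * K s) :
    ∫ t, K t * ∫ τ, f τ * g (t - τ) * W t τ ∂μ ∂μ =
      C * (∫ t, K t * f t ∂μ) * ∫ t, K t * g t ∂μ := by
  have hint : Integrable (fun p : G × G => K p.1 * (f p.2 * g (p.1 - p.2) * W p.1 p.2))
      (μ.prod μ) := by
    have hconv : Integrable (fun p : G × G => f p.2 * g (p.1 - p.2)) (μ.prod μ) := by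
      simpa using hf.convolution_integrand (ContinuousLinearMap.mul ℂ ℂ) hg
    refine (hconv.bdd_mul (c := MK * MW) ((hK.comp_fst).mul hW)
      (Eventually.of_forall fun p => ?_)).congr (Eventually.of_forall fun p => by
        simp only [Pi.mul_apply]; ring)
    rw [Pi.mul_apply, norm_mul]
    exact mul_le_mul (hKb _) (hWb _ _) (norm_nonneg _) ((norm_nonneg _).trans (hKb p.1))
  have inner : ∀ τ, ∫ t, K t * (f τ * g (t - τ) * W t τ) ∂μ =
      C * (K τ * f τ) * ∫ s, K s * g s ∂μ := by
    intro τ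
    rw [← integral_add_right_eq_self _ τ, ← integral_const_mul]
    refine integral_congr_ae (Eventually.of_forall fun s => ?_)
    simp only [add_sub_cancel_right]
    linear_combination (f τ * g s) * hKW τ s
  calc ∫ t, K t * ∫ τ, f τ * g (t - τ) * W t τ ∂μ ∂μ
      = ∫ t, ∫ τ, K t * (f τ * g (t - τ) * W t τ) ∂μ ∂μ := by
        simp_rw [integral_const_mul]
    _ = ∫ τ, ∫ t, K t * (f τ * g (t - τ) * W t τ) ∂μ ∂μ := integral_integral_swap hint
    _ = ∫ τ, C * (K τ * f τ) * ∫ s, K s * g s ∂μ ∂μ := by simp_rw [inner]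
    _ = C * (∫ t, K t * f t ∂μ) * ∫ t, K t * g t ∂μ := by
      rw [integral_mul_const, integral_const_mul]

end WeightedConvolution

section LinearCanonicalTransform

noncomputable def lctKernel (a b d u t : ℝ) : ℂ :=
  exp (I / 2 * ((a : ℂ) / b * t ^ 2 - 2 / b * u * t + (d : ℂ) / b * u ^ 2))

noncomputable def wconvWeight (a b t τ : ℝ) : ℂ :=
  exp (I * ((a : ℂ) / b * τ * (τ - t)))

theorem lct_eq_integral_lctKernel (a b d : ℝ) (f : ℝ → ℂ) (u : ℝ) :
    lct a b d f u = (1 / (2 * Real.pi * I * b)) ^ ((1 : ℂ) / 2) *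
      ∫ t, lctKernel a b d u t * f t := rfl

theorem norm_lctKernel (a b d u t : ℝ) : ‖lctKernel a b d u t‖ = 1 := by
  rw [lctKernel]
  convert norm_exp_I_mul_ofReal ((a / b * t ^ 2 - 2 / b * u * t + d / b * u ^ 2) / 2) using 3
  push_cast; ring

theorem norm_wconvWeight (a b t τ : ℝ) : ‖wconvWeight a b t τ‖ = 1 := by
  rw [wconvWeight]
  convert norm_exp_I_mul_ofReal (a / b * τ * (τ - t)) using 3
  push_cast; ring

theorem continuous_lctKernel (a b d u : ℝ) : Continuous (lctKernel a b d u) := by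
  unfold lctKernel; fun_prop

theorem continuous_wconvWeight_uncurry (a b : ℝ) :
    Continuous (fun p : ℝ × ℝ => wconvWeight a b p.1 p.2) := by
  unfold wconvWeight; fun_prop

/-- The cross terms `a/b · τ s` cancel, and the `u²` term is counted once too often. -/
theorem lctKernel_add_mul_wconvWeight (a b d u τ s : ℝ) :
    lctKernel a b d u (s + τ) * wconvWeight a b (s + τ) τ =
      exp (-I * d * u ^ 2 / (2 * b)) * lctKernel a b d u τ * lctKernel a b d u s := by
  simp only [lctKernel, wconvWeight, ← Complex.exp_add]
  congr 1
  push_cast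
  ring

theorem integral_lctKernel_mul_wconv (a b d u : ℝ) {f g : ℝ → ℂ}
    (hf : Integrable f) (hg : Integrable g) :
    ∫ t, lctKernel a b d u t * wconv a b f g t =
      exp (-I * d * u ^ 2 / (2 * b)) * (∫ t, lctKernel a b d u t * f t) *
        ∫ t, lctKernel a b d u t * g t :=
  integral_mul_weightedConvolution_eq hf hg
    (continuous_lctKernel a b d u).aestronglyMeasurable
    (continuous_wconvWeight_uncurry a b).aestronglyMeasurable
    (fun t => (norm_lctKernel a b d u t).le) (fun t τ => (norm_wconvWeight a b t τ).le)
    (lctKernel_add_mul_wconvWeight a b d u)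

end LinearCanonicalTransform

theorem Complex.cpow_mul_one_div_cpow {z : ℂ} (hz : z ≠ 0) (harg : z.arg ≠ Real.pi)
    (w : ℂ) :
    z ^ w * (1 / z) ^ w = 1 := by
  rw [one_div, inv_cpow z w harg]
  exact mul_inv_cancel₀ (by simp [cpow_eq_zero_iff, hz])

theorem lct_convolution_general (a b d : ℝ) (hb : b ≠ 0)
    (f g : ℝ → ℂ) (hf : Integrable f) (hg : Integrable g) (u : ℝ) :
    lct a b d (wconv a b f g) u =
      (2 * Real.pi * Complex.I * b) ^ ((1 : ℂ) / 2) *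
        Complex.exp (-Complex.I * d * u ^ 2 / (2 * b)) *
        lct a b d f u * lct a b d g u := by
  set z : ℂ := 2 * Real.pi * I * b
  have hz : z ≠ 0 := by simp [z, hb, Real.pi_ne_zero]
  have harg : z.arg ≠ Real.pi := fun h => by simp [z, arg_eq_pi_iff, hb] at h
  simp only [lct_eq_integral_lctKernel, integral_lctKernel_mul_wconv a b d u hf hg]
  linear_combination (-((1 / z) ^ ((1 : ℂ) / 2) * exp (-I * d * u ^ 2 / (2 * b)) *
    (∫ t, lctKernel a b d u t * f t) * ∫ t, lctKernel a b d u t * g t)) *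
    cpow_mul_one_div_cpow hz harg ((1 : ℂ) / 2)

theorem lct_convolution (a b c d : ℝ) (hb : b ≠ 0) (h : a * d - b * c = 1)
    (f g : ℝ → ℂ) (hf : Integrable f) (hg : Integrable g) (u : ℝ) :
    lct a b d (wconv a b f g) u =
      (2 * Real.pi * Complex.I * b) ^ ((1 : ℂ) / 2) *
        Complex.exp (-Complex.I * d * u ^ 2 / (2 * b)) *
        lct a b d f u * lct a b d g u :=
  lct_convolution_general a b d hb f g hf hg u
end

section
/- The quotient relation defining Boehmians is an equivalence relation: for pairs (f_n, φ_n) and (g_n, ψ_n) of sequences with f_n, g_n ∈ L¹(ℝ) ∩ L²(ℝ), {φ_n}, {ψ_n} delta sequences, satisfying f_m *ᴬ φ_n = f_n *ᴬ φ_m and g_m *ᴬ ψ_n = g_n *ᴬ ψ_m for all m, n, the relation (f_n/φ_n) ~ (g_n/ψ_n) iff f_n *ᴬ ψ_n = g_n *ᴬ φ_n for all n, is reflexive, symmetric, and transitive. -/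
open MeasureTheory Filter Complex

def IsQuot (a b : ℝ) (f : ℕ → ℝ → ℂ) (φ : ℕ → ℝ → ℂ) : Prop :=
  (∀ n, Integrable (f n)) ∧ (∀ n, MemLp (f n) 2) ∧ IsDeltaSeq a b φ ∧
    ∀ m n, wconv a b (f m) (φ n) =ᵐ[volume] wconv a b (f n) (φ m)

def QuotRel (a b : ℝ) (p q : (ℕ → ℝ → ℂ) × (ℕ → ℝ → ℂ)) : Prop :=
  ∀ n, wconv a b (p.1 n) (q.2 n) =ᵐ[volume] wconv a b (q.1 n) (p.2 n)


/-!
Multiplying by the chirp `exp (i a t² / (2 b))` turns the weighted convolution into the ordinary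
one, so the relation reads `f ⋆ ψ = g ⋆ φ` for the chirped functions. Reflexivity and symmetry are
immediate. For transitivity, Fourier transforms turn the hypotheses into `f̂ ψ̂ = ĝ φ̂` and
`ĝ ρ̂ = ĥ ψ̂`, whence `(f̂ ρ̂ - ĥ φ̂) ψ̂ = 0`. As `ψ` has compact support, `ψ̂` extends to an
entire function, which is nonzero at `0` because `∫ ψ = 1`; hence `ψ̂` vanishes on no open interval
and can be cancelled by continuity. Fourier inversion for the continuous integrable functions
`f ⋆ ρ` and `h ⋆ φ` then gives `f ⋆ ρ = h ⋆ φ`.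
-/

open Real
open scoped FourierTransform Convolution Topology
open ContinuousLinearMap (mul)

section FourierInjective

variable {V E : Type*} [NormedAddCommGroup V] [InnerProductSpace ℝ V] [MeasurableSpace V]
  [BorelSpace V] [FiniteDimensional ℝ V] [NormedAddCommGroup E] [NormedSpace ℂ E]

theorem MeasureTheory.Integrable.continuous_fourier {f : V → E} (hf : Integrable f) :
    Continuous (𝓕 f) :=
  VectorFourier.fourierIntegral_continuous Real.continuous_fourierChar continuous_inner hf

theorem Real.fourier_sub {f g : V → E} (hf : Integrable f) (hg : Integrable g) :
    𝓕 (f - g) = 𝓕 f - 𝓕 g := by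
  ext w
  simp only [Real.fourier_eq, Pi.sub_apply, smul_sub]
  exact integral_sub ((Real.fourierIntegral_convergent_iff w).2 hf)
    ((Real.fourierIntegral_convergent_iff w).2 hg)

theorem Real.eq_of_fourier_eq [CompleteSpace E] {f g : V → E} (hf : Integrable f)
    (hfc : Continuous f) (hg : Integrable g) (hgc : Continuous g) (h : 𝓕 f = 𝓕 g) : f = g := by
  have hzero : 𝓕 (f - g) = 0 := by rw [Real.fourier_sub hf hg, h, sub_self]
  have hinv := (hfc.sub hgc).fourierInv_fourier_eq (hf.sub hg)
    (by rw [hzero]; exact integrable_zero _ _ _)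
  rw [hzero] at hinv
  refine sub_eq_zero.1 (hinv.symm.trans ?_)
  ext v
  simp [Real.fourierInv_eq]

end FourierInjective

noncomputable def fourierLaplace (ψ : ℝ → ℂ) (z : ℂ) : ℂ :=
  ∫ t : ℝ, cexp (-2 * π * I * t * z) * ψ t

theorem fourierLaplace_ofReal (ψ : ℝ → ℂ) (w : ℝ) : fourierLaplace ψ w = 𝓕 ψ w := by
  rw [Real.fourier_real_eq_integral_exp_smul, fourierLaplace]
  congr 1 with t
  rw [smul_eq_mul]
  congr 2
  push_cast
  ring

theorem fourierLaplace_zero (ψ : ℝ → ℂ) : fourierLaplace ψ 0 = ∫ t, ψ t := by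
  simp [fourierLaplace]

theorem norm_fourierLaplace_kernel_le {t : ℝ} {z z₀ : ℂ} (hz : z ∈ Metric.ball z₀ 1) :
    ‖cexp (-2 * π * I * t * z)‖ ≤ Real.exp (2 * π * |t| * (|z₀.im| + 1)) := by
  have him : |z.im| ≤ |z₀.im| + 1 := by
    have := (abs_im_le_norm (z - z₀)).trans (mem_ball_iff_norm.1 hz).le
    rw [sub_im] at this
    linarith [abs_sub_abs_le_abs_sub z.im z₀.im]
  rw [Complex.norm_exp, Real.exp_le_exp]
  have hre : (-2 * π * I * t * z).re = 2 * π * t * z.im := by simp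
  rw [hre]
  calc 2 * π * t * z.im ≤ 2 * π * |t| * |z.im| := by
        rw [mul_assoc, mul_assoc (2 * π)]
        exact mul_le_mul_of_nonneg_left ((le_abs_self _).trans (abs_mul t z.im).le) (by positivity)
    _ ≤ 2 * π * |t| * (|z₀.im| + 1) := by gcongr

theorem differentiable_fourierLaplace {ψ : ℝ → ℂ} (hc : Continuous ψ) (hs : HasCompactSupport ψ) :
    Differentiable ℂ (fourierLaplace ψ) := by
  intro z₀
  set F : ℂ → ℝ → ℂ := fun z t => cexp (-2 * π * I * t * z) * ψ t
  set F' : ℂ → ℝ → ℂ := fun z t => cexp (-2 * π * I * t * z) * (-2 * π * I * t) * ψ t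
  set bound : ℝ → ℝ := fun t => Real.exp (2 * π * |t| * (|z₀.im| + 1)) * (2 * π * |t|) * ‖ψ t‖
  have hF : ∀ z, Continuous (F z) := fun z => by fun_prop
  have hF' : ∀ z, Continuous (F' z) := fun z => by fun_prop
  have hbound : Integrable bound :=
    (by fun_prop : Continuous bound).integrable_of_hasCompactSupport hs.norm.mul_left
  have hle : ∀ t, ∀ z ∈ Metric.ball z₀ 1, ‖F' z t‖ ≤ bound t := fun t z hz => by
    have hnorm : ‖-2 * π * I * t‖ = 2 * π * |t| := by
      simp [abs_of_pos pi_pos]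
    simp only [F', bound, norm_mul _ (ψ t), norm_mul _ (-2 * π * I * t : ℂ), hnorm]
    gcongr
    exact norm_fourierLaplace_kernel_le hz
  have hderiv : ∀ t, ∀ z ∈ Metric.ball z₀ 1, HasDerivAt (F · t) (F' z t) z := fun t z _ => by
    simpa [F, F', mul_comm] using
      ((hasDerivAt_id z).const_mul (-2 * π * I * t)).cexp.mul_const (ψ t)
  exact (hasDerivAt_integral_of_dominated_loc_of_deriv_le (Metric.ball_mem_nhds z₀ one_pos)
    (.of_forall fun z => (hF z).aestronglyMeasurable)
    ((hF z₀).integrable_of_hasCompactSupport hs.mul_left) (hF' z₀).aestronglyMeasurable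
    (.of_forall hle) hbound (.of_forall hderiv)).2.differentiableAt

theorem dense_setOf_fourier_ne_zero {ψ : ℝ → ℂ} (hc : Continuous ψ) (hs : HasCompactSupport ψ)
    (hψ : ∫ t, ψ t ≠ 0) : Dense {w : ℝ | 𝓕 ψ w ≠ 0} := by
  have hanalytic : AnalyticOnNhd ℂ (fourierLaplace ψ) Set.univ := fun z _ =>
    (differentiable_fourierLaplace hc hs).analyticAt z
  refine interior_eq_empty_iff_dense_compl.1 (Set.eq_empty_of_forall_notMem fun x hx => hψ ?_)
  have hzero : ∀ᶠ y : ℝ in 𝓝[≠] x, fourierLaplace ψ y = 0 := by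
    filter_upwards [nhdsWithin_le_nhds (mem_interior_iff_mem_nhds.1 hx)] with y hy
    rw [fourierLaplace_ofReal]
    exact hy
  have hfreq : ∃ᶠ z in 𝓝[≠] (x : ℂ), fourierLaplace ψ z = 0 :=
    (continuous_ofReal.continuousWithinAt.tendsto_nhdsWithin fun _ _ => by simp_all).frequently
      hzero.frequently
  rw [← fourierLaplace_zero]
  exact hanalytic.eqOn_zero_of_preconnected_of_frequently_eq_zero isPreconnected_univ
    (Set.mem_univ _) hfreq (Set.mem_univ 0)

theorem eq_of_mul_fourier_eq {φ₁ φ₂ ψ : ℝ → ℂ} (h₁ : Continuous φ₁) (h₂ : Continuous φ₂)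
    (hc : Continuous ψ) (hs : HasCompactSupport ψ) (hψ : ∫ t, ψ t ≠ 0)
    (h : ∀ w, φ₁ w * 𝓕 ψ w = φ₂ w * 𝓕 ψ w) : φ₁ = φ₂ :=
  h₁.ext_on (dense_setOf_fourier_ne_zero hc hs hψ) h₂ fun w hw => mul_right_cancel₀ hw (h w)

theorem convolution_eq_of_convolution_ae_eq {f g h φ ψ ρ : ℝ → ℂ}
    (hf : Integrable f) (hg : Integrable g) (hh : Integrable h)
    (hφc : Continuous φ) (hφs : HasCompactSupport φ) (hψc : Continuous ψ)
    (hψs : HasCompactSupport ψ) (hψ : ∫ t, ψ t ≠ 0) (hρc : Continuous ρ) (hρs : HasCompactSupport ρ)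
    (hfg : f ⋆[mul ℂ ℂ] ψ =ᵐ[volume] g ⋆[mul ℂ ℂ] φ)
    (hgh : g ⋆[mul ℂ ℂ] ρ =ᵐ[volume] h ⋆[mul ℂ ℂ] ψ) :
    f ⋆[mul ℂ ℂ] ρ = h ⋆[mul ℂ ℂ] φ := by
  have hφ : Integrable φ := hφc.integrable_of_hasCompactSupport hφs
  have hψi : Integrable ψ := hψc.integrable_of_hasCompactSupport hψs
  have hρ : Integrable ρ := hρc.integrable_of_hasCompactSupport hρs
  have hfρ := hf.integrable_convolution (mul ℂ ℂ) hρ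
  have hhφ := hh.integrable_convolution (mul ℂ ℂ) hφ
  have hfg' : ∀ w, 𝓕 f w * 𝓕 ψ w = 𝓕 g w * 𝓕 φ w := fun w => by
    rw [← fourier_mul_convolution_eq hf hψi, ← fourier_mul_convolution_eq hg hφ,
      fourier_congr_ae hfg]
  have hgh' : ∀ w, 𝓕 g w * 𝓕 ρ w = 𝓕 h w * 𝓕 ψ w := fun w => by
    rw [← fourier_mul_convolution_eq hg hρ, ← fourier_mul_convolution_eq hh hψi,
      fourier_congr_ae hgh]
  refine eq_of_fourier_eq hfρ (hρs.continuous_convolution_right _ hf.locallyIntegrable hρc)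
    hhφ (hφs.continuous_convolution_right _ hh.locallyIntegrable hφc) ?_
  refine eq_of_mul_fourier_eq hfρ.continuous_fourier hhφ.continuous_fourier hψc hψs hψ fun w => ?_
  rw [fourier_mul_convolution_eq hf hρ, fourier_mul_convolution_eq hh hφ]
  linear_combination 𝓕 ρ w * hfg' w + 𝓕 φ w * hgh' w

section Chirp

noncomputable def chirp (a b : ℝ) (f : ℝ → ℂ) (t : ℝ) : ℂ :=
  cexp (I * a * t ^ 2 / (2 * b)) * f t

variable (a b : ℝ)

theorem norm_cexp_chirp (t : ℝ) : ‖cexp (I * a * t ^ 2 / (2 * b))‖ = 1 := by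
  rw [show I * a * t ^ 2 / (2 * b) = ((a * t ^ 2 / (2 * b) : ℝ) : ℂ) * I by push_cast; ring,
    Complex.norm_exp_ofReal_mul_I]

theorem chirp_injective : Function.Injective (chirp a b) := fun _ _ h => funext fun t =>
  mul_left_cancel₀ (Complex.exp_ne_zero _) (congrFun h t)

theorem MeasureTheory.Integrable.chirp {f : ℝ → ℂ} (hf : Integrable f) :
    Integrable (chirp a b f) :=
  hf.bdd_mul (by fun_prop : Continuous _).aestronglyMeasurable
    (.of_forall fun t => (norm_cexp_chirp a b t).le)

theorem Continuous.chirp {f : ℝ → ℂ} (hf : Continuous f) : Continuous (chirp a b f) := by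
  unfold _root_.chirp
  fun_prop

theorem HasCompactSupport.chirp {f : ℝ → ℂ} (hf : HasCompactSupport f) :
    HasCompactSupport (chirp a b f) :=
  hf.mul_left

theorem Filter.EventuallyEq.chirp {f g : ℝ → ℂ} (h : f =ᵐ[volume] g) :
    chirp a b f =ᵐ[volume] chirp a b g := by
  filter_upwards [h] with t ht
  rw [_root_.chirp, ht, _root_.chirp]

variable {b}

theorem chirp_wconv (f g : ℝ → ℂ) :
    chirp a b (wconv a b f g) = chirp a b f ⋆[mul ℂ ℂ] chirp a b g := by
  ext t
  rw [convolution_def, chirp, wconv, ← integral_const_mul]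
  congr 1 with τ
  have hexp : cexp (I * a * t ^ 2 / (2 * b)) * cexp (I * (a / b * τ * (τ - t))) =
      cexp (I * a * τ ^ 2 / (2 * b)) * cexp (I * a * ((t - τ : ℝ) : ℂ) ^ 2 / (2 * b)) := by
    rw [← Complex.exp_add, ← Complex.exp_add]
    congr 1
    push_cast
    ring
  simp only [_root_.chirp, ContinuousLinearMap.mul_apply']
  linear_combination (f τ * g (t - τ)) * hexp

end Chirp

theorem wconv_eq_of_wconv_ae_eq {a b : ℝ} {f g h φ ψ ρ : ℝ → ℂ}
    (hf : Integrable f) (hg : Integrable g) (hh : Integrable h)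
    (hφc : Continuous φ) (hφs : HasCompactSupport φ) (hψc : Continuous ψ)
    (hψs : HasCompactSupport ψ) (hψ : ∫ t, chirp a b ψ t ≠ 0) (hρc : Continuous ρ)
    (hρs : HasCompactSupport ρ) (hfg : wconv a b f ψ =ᵐ[volume] wconv a b g φ)
    (hgh : wconv a b g ρ =ᵐ[volume] wconv a b h ψ) :
    wconv a b f ρ = wconv a b h φ := by
  apply chirp_injective a b
  rw [chirp_wconv, chirp_wconv]
  refine convolution_eq_of_convolution_ae_eq (hf.chirp a b) (hg.chirp a b) (hh.chirp a b)
    (hφc.chirp a b) (hφs.chirp a b) (hψc.chirp a b) (hψs.chirp a b) hψ (hρc.chirp a b)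
    (hρs.chirp a b) ?_ ?_
  · simpa only [chirp_wconv] using hfg.chirp a b
  · simpa only [chirp_wconv] using hgh.chirp a b

theorem quotRel_equivalence_general (a b : ℝ) :
    (∀ p, IsQuot a b p.1 p.2 → QuotRel a b p p) ∧
    (∀ p q, IsQuot a b p.1 p.2 → IsQuot a b q.1 q.2 →
      QuotRel a b p q → QuotRel a b q p) ∧
    (∀ p q r, IsQuot a b p.1 p.2 → IsQuot a b q.1 q.2 → IsQuot a b r.1 r.2 →
      QuotRel a b p q → QuotRel a b q r → QuotRel a b p r) := by
  refine ⟨fun p _ n => .rfl, fun p q _ _ hpq n => (hpq n).symm, ?_⟩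
  rintro p q r ⟨hf, -, ⟨hφc, hφs, -⟩, -⟩ ⟨hg, -, ⟨hψc, hψs, -, -, hψ, -⟩, -⟩
    ⟨hh, -, ⟨hρc, hρs, -⟩, -⟩ hpq hqr n
  exact .of_eq <| wconv_eq_of_wconv_ae_eq (hf n) (hg n) (hh n) (hφc n) (hφs n) (hψc n) (hψs n)
    ((hψ n).trans_ne one_ne_zero) (hρc n) (hρs n) (hpq n) (hqr n)

theorem quotRel_equivalence (a b : ℝ) (hb : b ≠ 0) :
    (∀ p, IsQuot a b p.1 p.2 → QuotRel a b p p) ∧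
    (∀ p q, IsQuot a b p.1 p.2 → IsQuot a b q.1 q.2 →
      QuotRel a b p q → QuotRel a b q p) ∧
    (∀ p q r, IsQuot a b p.1 p.2 → IsQuot a b q.1 q.2 → IsQuot a b r.1 r.2 →
      QuotRel a b p q → QuotRel a b q r → QuotRel a b p r) :=
  quotRel_equivalence_general a b
end
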